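/- Let K be an origin-symmetric convex body in ℝⁿ, R > 0, and let E₁, E₂ be linear subspaces of ℝⁿ with E₁ ⊇ E₂^⊥; set E = E₁ ∩ E₂. If K ∩ E₁ ⊆ R·B₂ⁿ and K° ∩ E₂ ⊆ R·B₂ⁿ, then (1/R)·B₂^E ⊆ P_{E₂}(K) ∩ E₁ = P_E(K ∩ E₁) ⊆ R·B₂^E; in particular d_G(P_E(K ∩ E₁), B₂^E) ≤ R² and d_G((P_{E₂}K) ∩ E₁, B₂^E) ≤ R². -/

import Mathlib

open Metric Set
open scoped Pointwise

noncomputable section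

abbrev Euc (n : ℕ) : Type := EuclideanSpace ℝ (Fin n)

/-- Orthogonal projection onto `F` as a map `ℝⁿ → ℝⁿ`. -/
def projCLM {n : ℕ} (F : Submodule ℝ (Euc n)) : Euc n →L[ℝ] Euc n :=
  F.subtypeL.comp (F.orthogonalProjection)

def IsSymmConvexBody {n : ℕ} (K : Set (Euc n)) : Prop :=
  IsCompact K ∧ Convex ℝ K ∧ (interior K).Nonempty ∧ K = -K

def polarBody {n : ℕ} (K : Set (Euc n)) : Set (Euc n) :=
  {y | ∀ x ∈ K, |(inner ℝ x y : ℝ)| ≤ 1}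

/-- Geometric distance between two origin-symmetric convex bodies with the same
linear hull: `inf {a b > 0 : b⁻¹ L ⊆ K ⊆ a L}`. -/
def geomDist {n : ℕ} (K L : Set (Euc n)) : ℝ :=
  sInf {d : ℝ | ∃ a b : ℝ, 0 < a ∧ 0 < b ∧ d = a * b ∧ b⁻¹ • L ⊆ K ∧ K ⊆ a • L}

/-- The Euclidean unit ball of a subspace `E`. -/
def ballIn {n : ℕ} (E : Submodule ℝ (Euc n)) : Set (Euc n) :=
  (E : Set (Euc n)) ∩ Metric.closedBall 0 1

lemma proj_mem {n : ℕ} (F : Submodule ℝ (Euc n)) (x : Euc n) : projCLM F x ∈ F :=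
  SetLike.coe_mem (F.orthogonalProjection x)

lemma proj_eq_self {n : ℕ} {F : Submodule ℝ (Euc n)} {x : Euc n} (h : x ∈ F) :
    projCLM F x = x :=
  Submodule.starProjection_eq_self_iff.mpr h

lemma proj_norm_le {n : ℕ} (F : Submodule ℝ (Euc n)) (x : Euc n) :
    ‖projCLM F x‖ ≤ ‖x‖ := by
  have : ‖projCLM F x‖ = ‖F.orthogonalProjection x‖ := rfl
  rw [this]
  calc ‖F.orthogonalProjection x‖ ≤ ‖F.orthogonalProjection‖ * ‖x‖ :=
        F.orthogonalProjection.le_opNorm x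
    _ ≤ 1 * ‖x‖ := by
        have := Submodule.orthogonalProjectionOnto_norm_le F
        nlinarith [norm_nonneg x]
    _ = ‖x‖ := one_mul _

lemma proj_inner {n : ℕ} (F : Submodule ℝ (Euc n)) (u v : Euc n) :
    (inner ℝ (projCLM F u) v : ℝ) = inner ℝ u (projCLM F v) :=
  Submodule.inner_starProjection_left_eq_right F u v

lemma key_proj {n : ℕ} {E₁ E₂ : Submodule ℝ (Euc n)} (h12 : E₂ᗮ ≤ E₁) {x : Euc n}
    (hx : x ∈ E₁) :
    projCLM E₂ x ∈ E₁ ⊓ E₂ ∧ projCLM (E₁ ⊓ E₂) x = projCLM E₂ x := by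
  have hw : x - projCLM E₂ x ∈ E₂ᗮ := Submodule.sub_starProjection_mem_orthogonal x
  have hmem : projCLM E₂ x ∈ E₁ ⊓ E₂ := by
    refine ⟨?_, proj_mem E₂ x⟩
    have := E₁.sub_mem hx (h12 hw)
    simpa using this
  refine ⟨hmem, ?_⟩
  exact Submodule.eq_starProjection_of_mem_orthogonal hmem
    (Submodule.orthogonal_le inf_le_right hw)

lemma zero_mem_interior_of_body {n : ℕ} {K : Set (Euc n)} (hK : IsSymmConvexBody K) :
    (0 : Euc n) ∈ interior K := by
  obtain ⟨-, hconv, ⟨p, hp⟩, hsymm⟩ := hK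
  have hnegp : -p ∈ interior K := by
    have e1 : ((-1 : ℝ)) • K = -K := by rw [Set.neg_smul_set, one_smul]
    have : interior K = -interior K := by
      calc interior K = interior (-K) := by rw [← hsymm]
        _ = interior (((-1 : ℝ)) • K) := by rw [e1]
        _ = ((-1 : ℝ)) • interior K := interior_smul₀ (by norm_num) K
        _ = -interior K := by rw [Set.neg_smul_set, one_smul]
    rw [this]
    exact Set.neg_mem_neg.mpr hp
  have := hconv.interior hp hnegp (by norm_num : (0:ℝ) ≤ 1/2)
    (by norm_num : (0:ℝ) ≤ 1/2) (by norm_num)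
  simpa using this

lemma claimA {n : ℕ} {K : Set (Euc n)} (hK : IsSymmConvexBody K)
    {R : ℝ} (hR : 0 < R) {E₁ E₂ : Submodule ℝ (Euc n)}
    (h2 : polarBody K ∩ (E₂ : Set (Euc n)) ⊆ Metric.closedBall 0 R) :
    R⁻¹ • ballIn (E₁ ⊓ E₂) ⊆ (⇑(projCLM E₂) '' K) ∩ (E₁ : Set (Euc n)) := by
  have h0int : (0 : Euc n) ∈ interior K := zero_mem_interior_of_body hK
  have h0K : (0 : Euc n) ∈ K := interior_subset h0int
  rintro _ ⟨u, ⟨huE, hu1⟩, rfl⟩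
  have hyE : R⁻¹ • u ∈ E₁ ⊓ E₂ := Submodule.smul_mem _ _ huE
  have hynorm : ‖R⁻¹ • u‖ ≤ R⁻¹ := by
    rw [norm_smul]
    simp only [Real.norm_eq_abs, abs_of_pos (inv_pos.mpr hR)]
    have : ‖u‖ ≤ 1 := by simpa [mem_closedBall, dist_zero_right] using hu1
    nlinarith [inv_pos.mpr hR]
  refine ⟨?_, hyE.1⟩
  by_contra hnot
  have hScompact : IsCompact (⇑(projCLM E₂) '' K) := hK.1.image (projCLM E₂).continuous
  have hSconvex : Convex ℝ (⇑(projCLM E₂) '' K) :=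
    hK.2.1.linear_image (projCLM E₂ : Euc n →ₗ[ℝ] Euc n)
  obtain ⟨f, u₀, hfS, hfy⟩ :=
    geometric_hahn_banach_closed_point hSconvex hScompact.isClosed hnot
  set v₀ := (InnerProductSpace.toDual ℝ (Euc n)).symm f with hv₀def
  have hv₀ : ∀ x, (inner ℝ v₀ x : ℝ) = f x := fun x => InnerProductSpace.toDual_symm_apply
  set v := projCLM E₂ v₀ with hvdef
  have hvE₂ : v ∈ E₂ := proj_mem E₂ v₀
  have hKlt : ∀ x ∈ K, (inner ℝ v x : ℝ) < u₀ := by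
    intro x hx
    have : (inner ℝ v x : ℝ) = f (projCLM E₂ x) := by rw [hvdef, proj_inner, hv₀]
    rw [this]
    exact hfS _ ⟨x, hx, rfl⟩
  have hyval : u₀ < (inner ℝ v (R⁻¹ • u) : ℝ) := by
    have : (inner ℝ v (R⁻¹ • u) : ℝ) = f (R⁻¹ • u) := by
      rw [hvdef, proj_inner, proj_eq_self hyE.2, hv₀]
    rw [this]; exact hfy
  have hu₀pos : 0 < u₀ := by
    have := hKlt 0 h0K
    simpa using this
  have hvne : v ≠ 0 := by
    intro h
    rw [h] at hyval
    simp at hyval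
    linarith
  obtain ⟨x₀, hx₀K, hx₀max⟩ := hK.1.exists_isMaxOn ⟨0, h0K⟩
    ((continuous_const.inner continuous_id).continuousOn :
      ContinuousOn (fun x => (inner ℝ v x : ℝ)) K)
  set c := (inner ℝ v x₀ : ℝ) with hcdef
  have hcu : c < u₀ := hKlt _ hx₀K
  have hc0 : 0 < c := by
    obtain ⟨ε, hε, hball⟩ := Metric.isOpen_iff.1 isOpen_interior 0 h0int
    set z : Euc n := (ε / 2) • ‖v‖⁻¹ • v with hzdef
    have hzK : z ∈ K := by
      apply interior_subset (hball ?_)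
      rw [mem_ball, dist_zero_right, hzdef, norm_smul, norm_smul]
      simp [abs_of_pos hε, norm_inv, abs_of_nonneg (norm_nonneg v),
        inv_mul_cancel₀ (norm_ne_zero_iff.mpr hvne)]
      linarith
    have hzval : (inner ℝ v z : ℝ) = (ε / 2) * ‖v‖ := by
      rw [hzdef, real_inner_smul_right, real_inner_smul_right, real_inner_self_eq_norm_sq]
      field_simp [norm_ne_zero_iff.mpr hvne]
    have hle : (inner ℝ v z : ℝ) ≤ c := hx₀max hzK
    have : 0 < (ε / 2) * ‖v‖ := mul_pos (by linarith) (norm_pos_iff.mpr hvne)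
    linarith [hzval ▸ hle]
  have hpolar : c⁻¹ • v ∈ polarBody K := by
    intro x hx
    have hxneg : -x ∈ K := by
      have : x ∈ -K := hK.2.2.2 ▸ hx
      simpa using this
    have h₁ : (inner ℝ v x : ℝ) ≤ c := hx₀max hx
    have h₂ : (inner ℝ v (-x) : ℝ) ≤ c := hx₀max hxneg
    rw [inner_neg_right] at h₂
    have : (inner ℝ x (c⁻¹ • v) : ℝ) = c⁻¹ * inner ℝ v x := by
      rw [real_inner_smul_right, real_inner_comm]
    rw [this, abs_le]
    constructor
    · rw [neg_le]
      calc -(c⁻¹ * (inner ℝ v x : ℝ)) = c⁻¹ * -(inner ℝ v x : ℝ) := by ring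
        _ ≤ c⁻¹ * c := by
            apply mul_le_mul_of_nonneg_left (by linarith) (le_of_lt (inv_pos.mpr hc0))
        _ = 1 := inv_mul_cancel₀ (ne_of_gt hc0)
    · calc c⁻¹ * (inner ℝ v x : ℝ) ≤ c⁻¹ * c :=
          mul_le_mul_of_nonneg_left h₁ (le_of_lt (inv_pos.mpr hc0))
        _ = 1 := inv_mul_cancel₀ (ne_of_gt hc0)
  have hvnorm : ‖c⁻¹ • v‖ ≤ R := by
    have := h2 ⟨hpolar, Submodule.smul_mem _ _ hvE₂⟩
    simpa [mem_closedBall, dist_zero_right] using this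
  have hvnorm' : ‖v‖ ≤ c * R := by
    rw [norm_smul, Real.norm_eq_abs, abs_of_pos (inv_pos.mpr hc0)] at hvnorm
    calc ‖v‖ = c * (c⁻¹ * ‖v‖) := by field_simp
      _ ≤ c * R := mul_le_mul_of_nonneg_left hvnorm (le_of_lt hc0)
  have hfinal : (inner ℝ v (R⁻¹ • u) : ℝ) ≤ c := by
    calc (inner ℝ v (R⁻¹ • u) : ℝ) ≤ ‖v‖ * ‖R⁻¹ • u‖ := real_inner_le_norm _ _
      _ ≤ (c * R) * R⁻¹ := by
          apply mul_le_mul hvnorm' hynorm (norm_nonneg _)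
          nlinarith
      _ = c := by field_simp
  linarith

lemma claimB {n : ℕ} {K : Set (Euc n)} {E₁ E₂ : Submodule ℝ (Euc n)} (h12 : E₂ᗮ ≤ E₁) :
    (⇑(projCLM E₂) '' K) ∩ (E₁ : Set (Euc n)) =
      ⇑(projCLM (E₁ ⊓ E₂)) '' (K ∩ (E₁ : Set (Euc n))) := by
  ext z
  constructor
  · rintro ⟨⟨x, hxK, rfl⟩, hzE₁⟩
    have hw : x - projCLM E₂ x ∈ E₂ᗮ := Submodule.sub_starProjection_mem_orthogonal x
    have hxE₁ : x ∈ E₁ := by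
      have := E₁.add_mem hzE₁ (h12 hw)
      simpa using this
    exact ⟨x, ⟨hxK, hxE₁⟩, (key_proj h12 hxE₁).2⟩
  · rintro ⟨x, ⟨hxK, hxE₁⟩, rfl⟩
    obtain ⟨hmem, heq⟩ := key_proj h12 hxE₁
    rw [heq]
    exact ⟨⟨x, hxK, rfl⟩, hmem.1⟩

theorem stmt19 (n : ℕ) (K : Set (Euc n)) (hK : IsSymmConvexBody K)
    (R : ℝ) (hR : 0 < R) (E₁ E₂ : Submodule ℝ (Euc n)) (h12 : E₂ᗮ ≤ E₁)
    (h1 : K ∩ (E₁ : Set (Euc n)) ⊆ Metric.closedBall 0 R)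
    (h2 : polarBody K ∩ (E₂ : Set (Euc n)) ⊆ Metric.closedBall 0 R) :
    R⁻¹ • ballIn (E₁ ⊓ E₂) ⊆ (⇑(projCLM E₂) '' K) ∩ (E₁ : Set (Euc n)) ∧
    (⇑(projCLM E₂) '' K) ∩ (E₁ : Set (Euc n)) =
      ⇑(projCLM (E₁ ⊓ E₂)) '' (K ∩ (E₁ : Set (Euc n))) ∧
    ⇑(projCLM (E₁ ⊓ E₂)) '' (K ∩ (E₁ : Set (Euc n))) ⊆ R • ballIn (E₁ ⊓ E₂) ∧
    geomDist (⇑(projCLM (E₁ ⊓ E₂)) '' (K ∩ (E₁ : Set (Euc n)))) (ballIn (E₁ ⊓ E₂)) ≤ R ^ 2 ∧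
    geomDist ((⇑(projCLM E₂) '' K) ∩ (E₁ : Set (Euc n))) (ballIn (E₁ ⊓ E₂)) ≤ R ^ 2 := by
  have hA := claimA (E₁ := E₁) hK hR h2
  have hB := claimB (K := K) h12
  have hC : ⇑(projCLM (E₁ ⊓ E₂)) '' (K ∩ (E₁ : Set (Euc n))) ⊆ R • ballIn (E₁ ⊓ E₂) := by
    rintro _ ⟨x, hx, rfl⟩
    have hnorm : ‖projCLM (E₁ ⊓ E₂) x‖ ≤ R := by
      calc ‖projCLM (E₁ ⊓ E₂) x‖ ≤ ‖x‖ := proj_norm_le _ _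
        _ ≤ R := by simpa [mem_closedBall, dist_zero_right] using h1 hx
    refine ⟨R⁻¹ • projCLM (E₁ ⊓ E₂) x, ⟨?_, ?_⟩, ?_⟩
    · exact Submodule.smul_mem _ _ (proj_mem _ _)
    · rw [mem_closedBall, dist_zero_right, norm_smul, Real.norm_eq_abs,
        abs_of_pos (inv_pos.mpr hR)]
      calc R⁻¹ * ‖projCLM (E₁ ⊓ E₂) x‖ ≤ R⁻¹ * R :=
          mul_le_mul_of_nonneg_left hnorm (le_of_lt (inv_pos.mpr hR))
        _ = 1 := inv_mul_cancel₀ (ne_of_gt hR)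
    · show R • R⁻¹ • projCLM (E₁ ⊓ E₂) x = _
      rw [smul_inv_smul₀ (ne_of_gt hR)]
  have hbdd : BddBelow {d : ℝ | ∃ a b : ℝ, 0 < a ∧ 0 < b ∧ d = a * b ∧
      b⁻¹ • ballIn (E₁ ⊓ E₂) ⊆ ⇑(projCLM (E₁ ⊓ E₂)) '' (K ∩ (E₁ : Set (Euc n))) ∧
      ⇑(projCLM (E₁ ⊓ E₂)) '' (K ∩ (E₁ : Set (Euc n))) ⊆ a • ballIn (E₁ ⊓ E₂)} := by
    refine ⟨0, ?_⟩
    rintro d ⟨a, b, ha, hb, rfl, -, -⟩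
    positivity
  have hmem : R ^ 2 ∈ {d : ℝ | ∃ a b : ℝ, 0 < a ∧ 0 < b ∧ d = a * b ∧
      b⁻¹ • ballIn (E₁ ⊓ E₂) ⊆ ⇑(projCLM (E₁ ⊓ E₂)) '' (K ∩ (E₁ : Set (Euc n))) ∧
      ⇑(projCLM (E₁ ⊓ E₂)) '' (K ∩ (E₁ : Set (Euc n))) ⊆ a • ballIn (E₁ ⊓ E₂)} := by
    exact ⟨R, R, hR, hR, sq R, by rw [← hB]; exact hA, hC⟩
  have hD : geomDist (⇑(projCLM (E₁ ⊓ E₂)) '' (K ∩ (E₁ : Set (Euc n)))) (ballIn (E₁ ⊓ E₂)) ≤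
      R ^ 2 := by
    unfold geomDist
    exact csInf_le hbdd hmem
  exact ⟨hA, hB, hC, hD, by rw [hB]; exact hD⟩
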